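/- Let n ≥ 0 and α > 0 be real numbers, let p ∈ [0,1], and let g be a real number. Define the error e = | n·p·g − round(round(α·n)·p)·(1/α)·g |, where round(x) denotes a nearest integer to x (so that |round(x) − x| ≤ 1/2). Then e ≤ (|g| / (2α)) · (p + 1). -/
import Mathlib


/-- **Proposition 5 (SynaptoGen, quantization error bound).**
For `n ≥ 0`, `α > 0`, `p ∈ [0,1]`, `g : ℝ`, and `round : ℝ → ℤ` a nearest-integer
rounding function (`|round y − y| ≤ 1/2` for all `y`), the error
`e = |n·p·g − round(round(α·n)·p)·(1/α)·g|` is bounded by `(|g|/(2α))·(p + 1)`. -/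
theorem synaptogen_quantization_error_bound
    (round : ℝ → ℤ) (hround : ∀ y : ℝ, |(round y : ℝ) - y| ≤ 1 / 2)
    (n α : ℝ) (hn : 0 ≤ n) (hα : 0 < α)
    (p : ℝ) (hp : p ∈ Set.Icc (0 : ℝ) 1) (g : ℝ) :
    |n * p * g - (round ((round (α * n) : ℝ) * p) : ℝ) * (1 / α) * g|
      ≤ |g| / (2 * α) * (p + 1) := by
  obtain ⟨hp0, hp1⟩ := hp
  set r1 : ℝ := (round (α * n) : ℝ) with hr1
  set r2 : ℝ := (round (r1 * p) : ℝ) with hr2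
  have h1 : |r1 - α * n| ≤ 1 / 2 := hround _
  have h2 : |r2 - r1 * p| ≤ 1 / 2 := hround _
  have key : |α * n * p - r2| ≤ (p + 1) / 2 := by
    have e1 : α * n * p - r2 = (α * n - r1) * p + (r1 * p - r2) := by ring
    calc |α * n * p - r2| = |(α * n - r1) * p + (r1 * p - r2)| := by rw [e1]
      _ ≤ |(α * n - r1) * p| + |r1 * p - r2| := abs_add_le _ _
      _ = |α * n - r1| * p + |r1 * p - r2| := by rw [abs_mul, abs_of_nonneg hp0]
      _ ≤ (1 / 2) * p + 1 / 2 := by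
          have := abs_sub_comm (α * n) r1 ▸ h1
          have h2' : |r1 * p - r2| ≤ 1 / 2 := by rw [abs_sub_comm]; exact h2
          exact add_le_add (mul_le_mul_of_nonneg_right (by rwa [abs_sub_comm]) hp0) h2'
      _ ≤ (p + 1) / 2 := by linarith
  have heq : n * p * g - r2 * (1 / α) * g = ((α * n * p - r2) / α) * g := by
    field_simp
  rw [heq, abs_mul, abs_div, abs_of_pos hα]
  have hgn : 0 ≤ |g| := abs_nonneg g
  have : |α * n * p - r2| / α ≤ (p + 1) / 2 / α :=
    by gcongr
  calc |α * n * p - r2| / α * |g| ≤ (p + 1) / 2 / α * |g| :=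
        mul_le_mul_of_nonneg_right this hgn
    _ = |g| / (2 * α) * (p + 1) := by field_simp
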